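/- Explicit sup-norm lower bound for the optimal two-spike pair (step in the proof of Lemma B.1): Let ζ* ∈ (0,1] and γ* ∈ (0,1], let ν* = (1−ζ*)δ_0 + ζ*δ_{γ*} and ν_OPT = (1 − ζ*/2)δ_0 + (ζ*/2)δ_{2γ*}, with unit noise level. Then sup_t |F_{ν_OPT}(t) − F_{ν*}(t)| ≥ (1/2) ζ* ( Φ((3/2)γ* − 1) + Φ(−(1/2)γ* − 1) − 2Φ((1/2)γ* − 1) ), where Φ is the standard normal CDF. -/
import Mathlib


open MeasureTheory ProbabilityTheory Set

/-- `Φ_σ`, the CDF of the Gaussian `N(0, σ²)`. -/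
noncomputable def gaussCDF (σ t : ℝ) : ℝ :=
  ∫ x in Set.Iic t, Real.exp (-(x ^ 2) / (2 * σ ^ 2)) / (σ * Real.sqrt (2 * Real.pi))

/-- CDF of the Gaussian location mixture with mixing distribution `ν` and noise level `σ`:
`F_ν(t) = ∫ Φ_σ(t − x) dν(x)`. -/
noncomputable def gmixCDF (σ : ℝ) (ν : Measure ℝ) (t : ℝ) : ℝ :=
  ∫ x, gaussCDF σ (t - x) ∂ν

/-- The two-spike mixing distribution `(1−ζ)δ_0 + ζδ_γ`. -/
noncomputable def twoSpike (ζ γ : ℝ) : Measure ℝ :=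
  ENNReal.ofReal (1 - ζ) • Measure.dirac 0 + ENNReal.ofReal ζ • Measure.dirac γ

/-- `Φ`, the standard normal CDF (`Φ = Φ_1`). -/
noncomputable def stdNormCDF (t : ℝ) : ℝ := gaussCDF 1 t


open scoped ENNReal

lemma gaussCDF_one_eq (t : ℝ) : gaussCDF 1 t = ∫ x in Set.Iic t, gaussianPDFReal 0 1 x := by
  unfold gaussCDF gaussianPDFReal
  norm_num [div_eq_inv_mul, mul_comm]

lemma gaussCDF_one_nonneg (t : ℝ) : 0 ≤ gaussCDF 1 t := by
  rw [gaussCDF_one_eq]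
  exact setIntegral_nonneg measurableSet_Iic fun x _ => gaussianPDFReal_nonneg 0 1 x

lemma gaussCDF_one_le_one (t : ℝ) : gaussCDF 1 t ≤ 1 := by
  rw [gaussCDF_one_eq]
  calc ∫ x in Set.Iic t, gaussianPDFReal 0 1 x ≤ ∫ x, gaussianPDFReal 0 1 x :=
        setIntegral_le_integral (integrable_gaussianPDFReal 0 1)
          (ae_of_all _ fun x => gaussianPDFReal_nonneg 0 1 x)
    _ = 1 := integral_gaussianPDFReal_eq_one 0 one_ne_zero

lemma gaussCDF_one_mono : Monotone (gaussCDF 1) := by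
  intro s t hst
  rw [gaussCDF_one_eq, gaussCDF_one_eq]
  exact setIntegral_mono_set (integrable_gaussianPDFReal 0 1).integrableOn
    (ae_of_all _ fun x => gaussianPDFReal_nonneg 0 1 x)
    (HasSubset.Subset.eventuallyLE (Iic_subset_Iic.2 hst))

lemma meas_aux (t : ℝ) : Measurable (fun x : ℝ => gaussCDF 1 (t - x)) :=
  gaussCDF_one_mono.measurable.comp (measurable_const.sub measurable_id)

lemma gmix_eval (ζ γ t : ℝ) (h0 : 0 ≤ ζ) (h1 : ζ ≤ 1) :
    gmixCDF 1 (twoSpike ζ γ) t = (1 - ζ) * stdNormCDF t + ζ * stdNormCDF (t - γ) := by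
  have hm := meas_aux t
  have hint : ∀ (a : ℝ) (c : ℝ≥0∞), c ≠ ⊤ →
      Integrable (fun x : ℝ => gaussCDF 1 (t - x)) (c • Measure.dirac a) := by
    intro a c hc
    refine Integrable.smul_measure ?_ hc
    refine (integrable_const (1:ℝ)).mono' hm.aestronglyMeasurable (ae_of_all _ fun x => ?_)
    rw [Real.norm_eq_abs, abs_le]
    exact ⟨by linarith [gaussCDF_one_nonneg (t - x)], gaussCDF_one_le_one _⟩
  unfold gmixCDF twoSpike
  rw [integral_add_measure (hint 0 _ ENNReal.ofReal_ne_top) (hint γ _ ENNReal.ofReal_ne_top),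
    integral_smul_measure, integral_smul_measure, integral_dirac' _ _ hm.stronglyMeasurable,
    integral_dirac' _ _ hm.stronglyMeasurable, ENNReal.toReal_ofReal (by linarith),
    ENNReal.toReal_ofReal h0]
  simp [stdNormCDF]

/-- Explicit sup-norm lower bound for the optimal two-spike pair
(step in the proof of Lemma B.1), at unit noise level. -/
theorem two_spike_pair_supnorm_lower_bound
    (ζs γs : ℝ) (hζ : ζs ∈ Set.Ioc (0 : ℝ) 1) (hγ : γs ∈ Set.Ioc (0 : ℝ) 1) :
    (⨆ t : ℝ, |gmixCDF 1 (twoSpike (ζs / 2) (2 * γs)) t -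
        gmixCDF 1 (twoSpike ζs γs) t|) ≥
      1 / 2 * ζs * (stdNormCDF (3 / 2 * γs - 1) + stdNormCDF (-(1 / 2) * γs - 1) -
        2 * stdNormCDF (1 / 2 * γs - 1)) := by
  obtain ⟨hζ0, hζ1⟩ := hζ
  have hbd : ∀ ζ γ t, 0 ≤ ζ → ζ ≤ 1 → |gmixCDF 1 (twoSpike ζ γ) t| ≤ 1 := by
    intro ζ γ t h0 h1
    rw [gmix_eval ζ γ t h0 h1, abs_le]
    have n1 : (0:ℝ) ≤ stdNormCDF t := gaussCDF_one_nonneg t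
    have n2 : (0:ℝ) ≤ stdNormCDF (t - γ) := gaussCDF_one_nonneg (t - γ)
    have u1 : stdNormCDF t ≤ 1 := gaussCDF_one_le_one t
    have u2 : stdNormCDF (t - γ) ≤ 1 := gaussCDF_one_le_one (t - γ)
    constructor
    · nlinarith
    · nlinarith
  have hb : BddAbove (Set.range fun t => |gmixCDF 1 (twoSpike (ζs / 2) (2 * γs)) t -
      gmixCDF 1 (twoSpike ζs γs) t|) := by
    refine ⟨2, ?_⟩
    rintro x ⟨t, rfl⟩
    calc |gmixCDF 1 (twoSpike (ζs / 2) (2 * γs)) t - gmixCDF 1 (twoSpike ζs γs) t|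
        ≤ |gmixCDF 1 (twoSpike (ζs / 2) (2 * γs)) t| + |gmixCDF 1 (twoSpike ζs γs) t| :=
          abs_sub _ _
      _ ≤ 2 := by
          have h1 := hbd (ζs / 2) (2 * γs) t (by linarith) (by linarith)
          have h2 := hbd ζs γs t (by linarith) (by linarith)
          linarith
  set t₀ : ℝ := 3 / 2 * γs - 1 with ht₀
  have key : gmixCDF 1 (twoSpike (ζs / 2) (2 * γs)) t₀ - gmixCDF 1 (twoSpike ζs γs) t₀ =
      1 / 2 * ζs * (stdNormCDF (3 / 2 * γs - 1) + stdNormCDF (-(1 / 2) * γs - 1) -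
        2 * stdNormCDF (1 / 2 * γs - 1)) := by
    rw [gmix_eval _ _ _ (by linarith) (by linarith), gmix_eval _ _ _ (by linarith) (by linarith)]
    have e1 : t₀ - 2 * γs = -(1 / 2) * γs - 1 := by ring
    have e2 : t₀ - γs = 1 / 2 * γs - 1 := by ring
    rw [e1, e2, ht₀]
    ring
  calc 1 / 2 * ζs * (stdNormCDF (3 / 2 * γs - 1) + stdNormCDF (-(1 / 2) * γs - 1) -
        2 * stdNormCDF (1 / 2 * γs - 1))
      = gmixCDF 1 (twoSpike (ζs / 2) (2 * γs)) t₀ - gmixCDF 1 (twoSpike ζs γs) t₀ := key.symm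
    _ ≤ |gmixCDF 1 (twoSpike (ζs / 2) (2 * γs)) t₀ - gmixCDF 1 (twoSpike ζs γs) t₀| :=
        le_abs_self _
    _ ≤ _ := le_ciSup hb t₀
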